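/- Fix d, N ∈ ℕ with d, N ≥ 1 and τ ∈ (0,∞]. Let a_j, b_j : [0,τ) → ℂ, e_j, g_j : [0,τ) → ℂ^d (columns), f_j, h_j : [0,τ) → ℂ^{1×d} (rows), and M : [0,τ) → ℂ^{d×d} be continuously differentiable, set ã_j = a_j − iδ/2 and b̃_j = b_j + iδ/2, and suppose the tilde separation conditions ã_j − ã_k ∉ Λ, b̃_j − b̃_k ∉ Λ (j ≠ k) and ã_j − b̃_k ∉ Λ hold on [0,τ). Suppose that on [0,τ) the variables (ã_j, e_j, f_j), (b̃_j, g_j, h_j), M satisfy: the spin equations e_j' = 2i Σ_{k≠j} ℘₂(ã_j−ã_k)(f_k e_j) e_k, f_j' = −2i Σ_{k≠j} ℘₂(ã_j−ã_k)(f_j e_k) f_k, g_j' = 2i Σ_{k≠j} ℘₂(b̃_j−b̃_k)(h_k g_j) g_k, h_j' = −2i Σ_{k≠j} ℘₂(b̃_j−b̃_k)(h_j g_k) h_k; the background equation M' = −(1/2) Σ_j Σ_{k≠j} [e_jf_j, e_kf_k] ϰ′(ã_j−ã_k) + (1/2) Σ_j Σ_{k≠j} [g_jh_j, g_kh_k]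 ϰ′(b̃_j−b̃_k); and the Bäcklund relations ã_j' f_j = 2 f_j M + 2i Σ_{k≠j} (f_j e_k) ζ₂(ã_j−ã_k) f_k − 2i Σ_{k=1}^N (f_j g_k) ζ₂(ã_j−b̃_k) h_k and b̃_j' g_j = 2 M g_j − 2i Σ_{k≠j} (h_k g_j) ζ₂(b̃_j−b̃_k) g_k + 2i Σ_{k=1}^N (f_k g_j) ζ₂(b̃_j−ã_k) e_k; and that at t = 0: f_j e_j = 1 = h_j g_j for all j and Σ_j e_jf_j = Σ_j g_jh_j. Then, writing P_j = e_j f_j and Q_j = g_j h_j, the following hold for all t ∈ [0,τ): a_j' P_j = 2 P_j M + 2i Σ_{k≠j} P_j P_k ζ₂(a_j−a_k) − 2i Σ_{k=1}^N P_j Q_k ζ₂(a_j−b_k+iδ); b_j' Q_j = 2 M Q_j − 2i Σ_{k≠j} Q_k Q_j ζ₂(b_j−b_k) + 2i Σ_{k=1}^N P_k Q_j ζ₂(b_j−a_k+iδ); P_j' = −2i Σ_{k≠j} [P_j,P_k] ℘₂(a_j−a_k); Q_j' = −2i Σ_{k≠j} [Q_j,Q_k] ℘₂(b_j−b_k); P_j²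 = P_j; Q_j² = Q_j; and Σ_j P_j = Σ_j Q_j. -/

import Mathlib

open Complex MeasureTheory Filter Set Topology Matrix

noncomputable section

/-- The period lattice `Λ = {2nℓ + 2miδ : (n,m) ∈ ℤ²}`. -/
def inLattice (l d : ℝ) (z : ℂ) : Prop :=
  ∃ n m : ℤ, z = 2 * (n : ℂ) * (l : ℂ) + 2 * (m : ℂ) * (d : ℂ) * Complex.I

/-- A lattice point indexed by `(n,m) ∈ ℤ²`. -/
def latPt (l d : ℝ) (p : ℤ × ℤ) : ℂ :=
  2 * (p.1 : ℂ) * (l : ℂ) + 2 * (p.2 : ℂ) * (d : ℂ) * Complex.I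

/-- The Weierstrass zeta function with half-periods `(ℓ, iδ)`. -/
def wzeta (l d : ℝ) (z : ℂ) : ℂ :=
  1 / z + ∑' p : ℤ × ℤ,
    if p = 0 then 0 else
      1 / (z - latPt l d p) + 1 / latPt l d p + z / (latPt l d p) ^ 2

def eta1 (l d : ℝ) : ℂ := wzeta l d (l : ℂ)

def eta2 (l d : ℝ) : ℂ := wzeta l d ((d : ℂ) * Complex.I)

def zeta1 (l d : ℝ) (z : ℂ) : ℂ := wzeta l d z - (eta1 l d / (l : ℂ)) * z

def zeta2 (l d : ℝ) (z : ℂ) : ℂ := wzeta l d z - (eta2 l d / ((d : ℂ) * Complex.I)) * z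

/-- `℘₂ = -ζ₂'`. -/
def wp2 (l d : ℝ) (z : ℂ) : ℂ := -deriv (zeta2 l d) z

/-- `℘₂'`. -/
def wp2' (l d : ℝ) (z : ℂ) : ℂ := deriv (wp2 l d) z

/-- `ϰ = ζ₂² - ℘₂`. -/
def kappa (l d : ℝ) (z : ℂ) : ℂ := (zeta2 l d z) ^ 2 - wp2 l d z

/-- `ϰ'`. -/
def kappa' (l d : ℝ) (z : ℂ) : ℂ := deriv (kappa l d) z

def gamma0 (l d : ℝ) : ℝ := Real.pi / (2 * l * d)

variable {l dl : ℝ}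


lemma latPt_add (q r : ℤ × ℤ) : latPt l dl (q + r) = latPt l dl q + latPt l dl r := by
  simp only [latPt, Prod.fst_add, Prod.snd_add]
  push_cast; ring

lemma latPt_neg (q : ℤ × ℤ) : latPt l dl (-q) = - latPt l dl q := by
  simp only [latPt, Prod.fst_neg, Prod.snd_neg]
  push_cast; ring

lemma latPt_re (q : ℤ × ℤ) : (latPt l dl q).re = 2 * q.1 * l := by
  simp [latPt]

lemma latPt_im (q : ℤ × ℤ) : (latPt l dl q).im = 2 * q.2 * dl := by
  simp [latPt]

lemma latPt_norm_ge (hl : 0 < l) (hdl : 0 < dl) (q : ℤ × ℤ) :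
    2 * min l dl * max |(q.1 : ℝ)| |(q.2 : ℝ)| ≤ ‖latPt l dl q‖ := by
  rcases le_total |(q.1 : ℝ)| |(q.2 : ℝ)| with h | h
  · rw [max_eq_right h]
    calc 2 * min l dl * |(q.2 : ℝ)| ≤ 2 * dl * |(q.2 : ℝ)| := by
          have := min_le_right l dl
          nlinarith [abs_nonneg (q.2 : ℝ)]
      _ = |(latPt l dl q).im| := by
          rw [latPt_im, abs_mul, abs_mul, _root_.abs_of_nonneg (by norm_num : (0:ℝ) ≤ 2),
            _root_.abs_of_pos hdl]; ring
      _ ≤ ‖latPt l dl q‖ := Complex.abs_im_le_norm _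
  · rw [max_eq_left h]
    calc 2 * min l dl * |(q.1 : ℝ)| ≤ 2 * l * |(q.1 : ℝ)| := by
          have := min_le_left l dl
          nlinarith [abs_nonneg (q.1 : ℝ)]
      _ = |(latPt l dl q).re| := by
          rw [latPt_re, abs_mul, abs_mul, _root_.abs_of_nonneg (by norm_num : (0:ℝ) ≤ 2),
            _root_.abs_of_pos hl]; ring
      _ ≤ ‖latPt l dl q‖ := Complex.abs_re_le_norm _

lemma summable_latPt_aux :
    Summable fun q : ℤ × ℤ => (max |(q.1 : ℝ)| |(q.2 : ℝ)|) ^ (-(3:ℝ)) := by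
  have h := EisensteinSeries.summable_one_div_norm_rpow (k := 3) (by norm_num)
  refine (finTwoArrowEquiv ℤ).summable_iff.1 (h.congr fun x => ?_)
  have hx : ‖x‖ = max |(x 0 : ℝ)| |(x 1 : ℝ)| := by
    rw [EisensteinSeries.norm_eq_max_natAbs]
    push_cast [Nat.cast_natAbs]
    simp
  simp only [Function.comp, finTwoArrowEquiv_apply, hx]
  rfl


lemma summable_of_latPt_bound (hl : 0 < l) (hdl : 0 < dl) {F : ℤ × ℤ → ℂ} {K R : ℝ}
    (hK : 0 ≤ K)
    (hb : ∀ q : ℤ × ℤ, R ≤ ‖latPt l dl q‖ → ‖F q‖ ≤ K / ‖latPt l dl q‖ ^ 3) :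
    Summable F := by
  set c : ℝ := 2 * min l dl with hc
  have hcpos : 0 < c := by
    have := lt_min hl hdl
    positivity
  set T : ℝ := max R 1 with hT
  have hTpos : 0 < T := lt_of_lt_of_le one_pos (le_max_right _ _)
  apply Summable.of_norm_bounded_eventually
    (g := fun q : ℤ × ℤ => (K / c ^ 3) * (max |(q.1 : ℝ)| |(q.2 : ℝ)|) ^ (-(3:ℝ)))
    (summable_latPt_aux.mul_left _)
  rw [Filter.eventually_cofinite]
  have hfin : {q : ℤ × ℤ | max |(q.1 : ℝ)| |(q.2 : ℝ)| ≤ T / c}.Finite := by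
    apply Set.Finite.subset (Set.finite_Icc (⟨-⌈T / c⌉, -⌈T / c⌉⟩ : ℤ × ℤ) ⟨⌈T / c⌉, ⌈T / c⌉⟩)
    intro q hq
    simp only [Set.mem_setOf_eq, max_le_iff] at hq
    have h1 : |(q.1 : ℝ)| ≤ (⌈T / c⌉ : ℝ) := hq.1.trans (Int.le_ceil _)
    have h2 : |(q.2 : ℝ)| ≤ (⌈T / c⌉ : ℝ) := hq.2.trans (Int.le_ceil _)
    rw [abs_le] at h1 h2
    simp only [Set.mem_Icc, Prod.le_def]
    refine ⟨⟨?_, ?_⟩, ?_, ?_⟩ <;> [exact_mod_cast h1.1; exact_mod_cast h2.1;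
      exact_mod_cast h1.2; exact_mod_cast h2.2]
  apply hfin.subset
  intro q hq
  simp only [Set.mem_setOf_eq, not_le] at hq ⊢
  by_contra hM
  push_neg at hM
  set M : ℝ := max |(q.1 : ℝ)| |(q.2 : ℝ)| with hMdef
  have hMpos : 0 < M := by
    have : T / c < M := hM
    have : 0 < T / c := div_pos hTpos hcpos
    linarith
  have hcM : T < c * M := by
    rw [div_lt_iff₀ hcpos] at hM; linarith
  have hω : c * M ≤ ‖latPt l dl q‖ := latPt_norm_ge hl hdl q
  have hRω : R ≤ ‖latPt l dl q‖ := le_trans (le_trans (le_max_left R 1) hcM.le) hω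
  have key : ‖F q‖ ≤ K / ‖latPt l dl q‖ ^ 3 := hb q hRω
  have hωpos : 0 < ‖latPt l dl q‖ := lt_of_lt_of_le (by positivity) hω
  have h2 : K / ‖latPt l dl q‖ ^ 3 ≤ K / (c * M) ^ 3 := by
    apply div_le_div_of_nonneg_left hK (by positivity)
    exact pow_le_pow_left₀ (by positivity) hω 3
  have hfinal : ‖F q‖ ≤ K / c ^ 3 * M ^ (-(3:ℝ)) :=
    calc ‖F q‖ ≤ K / (c * M) ^ 3 := key.trans h2
      _ = K / c ^ 3 * M ^ (-(3:ℝ)) := by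
          rw [Real.rpow_neg hMpos.le, show ((3:ℝ)) = ((3:ℕ):ℝ) by norm_num,
            Real.rpow_natCast, mul_pow]
          field_simp
  exact absurd hfinal (not_le.2 hq)




/-- The summand of the Weierstrass zeta series. -/
def Tz (l dl : ℝ) (w : ℂ) (q : ℤ × ℤ) : ℂ :=
  if q = 0 then 0 else 1 / (w - latPt l dl q) + 1 / latPt l dl q + w / (latPt l dl q) ^ 2

lemma wzeta_eq (w : ℂ) : wzeta l dl w = 1 / w + ∑' q : ℤ × ℤ, Tz l dl w q := rfl

lemma norm_half_le {w ω : ℂ} (h : 2 * ‖w‖ + 2 ≤ ‖ω‖) :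
    ‖ω‖ / 2 ≤ ‖w - ω‖ ∧ w - ω ≠ 0 ∧ ω ≠ 0 := by
  have hw := norm_nonneg w
  have h2 : ‖ω‖ - ‖w‖ ≤ ‖w - ω‖ := by
    have := norm_sub_norm_le ω w
    rwa [norm_sub_rev] at this
  have hhalf : ‖ω‖ / 2 ≤ ‖w - ω‖ := by linarith
  refine ⟨hhalf, ?_, ?_⟩
  · intro h0
    rw [h0, norm_zero] at hhalf
    linarith
  · intro h0
    rw [h0, norm_zero] at h
    linarith

lemma summable_Tz (hl : 0 < l) (hdl : 0 < dl) (w : ℂ) : Summable (Tz l dl w) := by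
  apply summable_of_latPt_bound hl hdl (K := 2 * ‖w‖ ^ 2) (R := 2 * ‖w‖ + 2)
    (by positivity)
  intro q hq
  obtain ⟨hhalf, hsub, hω⟩ := norm_half_le hq
  set ω := latPt l dl q with hωd
  have hq0 : q ≠ 0 := fun h0 => hω (by simp [hωd, h0, latPt])
  have hid : Tz l dl w q = w ^ 2 / ((w - ω) * ω ^ 2) := by
    rw [Tz, if_neg hq0, ← hωd]
    field_simp
    ring
  rw [hid]
  rw [norm_div, norm_mul, norm_pow, norm_pow]
  have hωpos : (0:ℝ) < ‖ω‖ := norm_pos_iff.mpr hω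
  have hd : ‖ω‖/2 * ‖ω‖^2 ≤ ‖w - ω‖ * ‖ω‖ ^ 2 := by nlinarith
  calc ‖w‖ ^ 2 / (‖w - ω‖ * ‖ω‖ ^ 2) ≤ ‖w‖ ^ 2 / (‖ω‖/2 * ‖ω‖^2) := by
        apply div_le_div_of_nonneg_left (by positivity) (by positivity) hd
    _ = 2 * ‖w‖ ^ 2 / ‖ω‖ ^ 3 := by
        field_simp

lemma wzeta_odd (z : ℂ) : wzeta l dl (-z) = - wzeta l dl z := by
  rw [wzeta_eq, wzeta_eq]
  have h : ∀ q : ℤ × ℤ, Tz l dl (-z) (-q) = - Tz l dl z q := by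
    intro q
    rw [Tz, Tz, latPt_neg]
    by_cases hq : q = 0
    · simp [hq]
    · rw [if_neg hq, if_neg (by simpa using hq)]
      have : -z - -latPt l dl q = -(z - latPt l dl q) := by ring
      rw [this]
      rw [div_neg, div_neg, neg_sq, neg_div]
      ring
  have h2 : ∑' q : ℤ × ℤ, Tz l dl (-z) q = ∑' q : ℤ × ℤ, Tz l dl (-z) (-q) :=
    ((Equiv.neg (ℤ × ℤ)).tsum_eq (Tz l dl (-z))).symm
  rw [h2, tsum_congr h, tsum_neg]
  ring


lemma latPt_e : latPt l dl (0,1) = 2 * (dl:ℂ) * Complex.I := by simp [latPt]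

/-- The `z`-independent part of the period difference series. -/
def Afun (l dl : ℝ) (q : ℤ × ℤ) : ℂ :=
  if q = 0 ∨ q = -(0,1) then 0 else
    1 / (latPt l dl q + 2 * (dl:ℂ) * Complex.I) - 1 / latPt l dl q +
      (2 * (dl:ℂ) * Complex.I) / (latPt l dl q + 2 * (dl:ℂ) * Complex.I) ^ 2

/-- The `z`-linear part of the period difference series. -/
def Bfun (l dl : ℝ) (q : ℤ × ℤ) : ℂ :=
  if q = 0 ∨ q = -(0,1) then 0 else
    1 / (latPt l dl q + 2 * (dl:ℂ) * Complex.I) ^ 2 - 1 / (latPt l dl q) ^ 2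

lemma norm_shift_ge {ω : ℂ} (p : ℂ) (h : 2 * ‖p‖ + 2 ≤ ‖ω‖) :
    ‖ω‖ / 2 ≤ ‖ω + p‖ ∧ ω + p ≠ 0 ∧ ω ≠ 0 := by
  have h' : 2 * ‖p‖ + 2 ≤ ‖-ω‖ := by rwa [norm_neg]
  obtain ⟨h1, h2, h3⟩ := norm_half_le h'
  have e1 : p - -ω = ω + p := by ring
  rw [e1] at h1 h2
  rw [norm_neg] at h1
  exact ⟨h1, h2, fun h0 => h3 (by rw [h0, neg_zero])⟩

lemma summable_Afun (hl : 0 < l) (hdl : 0 < dl) : Summable (Afun l dl) := by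
  set p : ℂ := 2 * (dl:ℂ) * Complex.I with hp
  clear_value p
  apply summable_of_latPt_bound hl hdl (K := 4 * ‖p‖ ^ 2) (R := 2 * ‖p‖ + 2) (by positivity)
  intro q hq
  set ω := latPt l dl q with hωd
  clear_value ω
  obtain ⟨hhalf, hne, hω⟩ := norm_shift_ge p hq
  have hωpos : (0:ℝ) < ‖ω‖ := norm_pos_iff.mpr hω
  by_cases hb : q = 0 ∨ q = -(0,1)
  · rw [Afun, if_pos hb, norm_zero]; positivity
  · rw [Afun, if_neg hb, ← hωd, ← hp]
    have hid : 1 / (ω + p) - 1 / ω + p / (ω + p) ^ 2 = -(p ^ 2) / (ω * (ω + p) ^ 2) := by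
      field_simp
      ring
    rw [hid, norm_div, norm_neg, norm_mul, norm_pow, norm_pow]
    have hsq : (‖ω‖/2) ^ 2 ≤ ‖ω + p‖ ^ 2 := by nlinarith [hhalf, norm_nonneg (ω + p)]
    have hd : ‖ω‖ * (‖ω‖/2) ^ 2 ≤ ‖ω‖ * ‖ω + p‖ ^ 2 := by nlinarith
    calc ‖p‖ ^ 2 / (‖ω‖ * ‖ω + p‖ ^ 2) ≤ ‖p‖ ^ 2 / (‖ω‖ * (‖ω‖/2) ^ 2) := by
          apply div_le_div_of_nonneg_left (by positivity) (by positivity) hd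
      _ = 4 * ‖p‖ ^ 2 / ‖ω‖ ^ 3 := by
          rw [div_eq_div_iff (by positivity) (by positivity)]; ring

lemma summable_Bfun (hl : 0 < l) (hdl : 0 < dl) : Summable (Bfun l dl) := by
  set p : ℂ := 2 * (dl:ℂ) * Complex.I with hp
  clear_value p
  apply summable_of_latPt_bound hl hdl (K := 12 * ‖p‖) (R := 2 * ‖p‖ + 2) (by positivity)
  intro q hq
  set ω := latPt l dl q with hωd
  clear_value ω
  obtain ⟨hhalf, hne, hω⟩ := norm_shift_ge p hq
  have hωpos : (0:ℝ) < ‖ω‖ := norm_pos_iff.mpr hω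
  have hpp0 : (0:ℝ) ≤ ‖p‖ := norm_nonneg p
  by_cases hb : q = 0 ∨ q = -(0,1)
  · rw [Bfun, if_pos hb, norm_zero]; positivity
  · rw [Bfun, if_neg hb, ← hωd, ← hp]
    have hid : 1 / (ω + p) ^ 2 - 1 / ω ^ 2 = -(p * (2 * ω + p)) / (ω ^ 2 * (ω + p) ^ 2) := by
      field_simp
      ring
    rw [hid, norm_div, norm_neg, norm_mul, norm_mul, norm_pow, norm_pow]
    have hnum : ‖p‖ * ‖2 * ω + p‖ ≤ ‖p‖ * (3 * ‖ω‖) := by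
      apply mul_le_mul_of_nonneg_left _ hpp0
      calc ‖2 * ω + p‖ ≤ ‖2 * ω‖ + ‖p‖ := norm_add_le _ _
        _ = 2 * ‖ω‖ + ‖p‖ := by rw [norm_mul]; norm_num
        _ ≤ 3 * ‖ω‖ := by linarith
    have hsq : (‖ω‖/2) ^ 2 ≤ ‖ω + p‖ ^ 2 := by nlinarith [hhalf, norm_nonneg (ω + p)]
    have hden : ‖ω‖ ^ 2 * (‖ω‖/2) ^ 2 ≤ ‖ω‖ ^ 2 * ‖ω + p‖ ^ 2 := by nlinarith
    calc ‖p‖ * ‖2 * ω + p‖ / (‖ω‖ ^ 2 * ‖ω + p‖ ^ 2)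
        ≤ ‖p‖ * (3 * ‖ω‖) / (‖ω‖ ^ 2 * (‖ω‖/2) ^ 2) := by
          apply div_le_div₀ (by positivity) hnum (by positivity) hden
      _ = 12 * ‖p‖ / ‖ω‖ ^ 3 := by
          rw [div_eq_div_iff (by positivity) (by positivity)]; ring

lemma tsum_Bfun_zero : ∑' q : ℤ × ℤ, Bfun l dl q = 0 := by
  set σ : ℤ × ℤ ≃ ℤ × ℤ :=
    ⟨fun q => -(0,1) - q, fun q => -(0,1) - q, fun q => sub_sub_cancel _ _,
      fun q => sub_sub_cancel _ _⟩ with hσ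
  have key : ∀ q, Bfun l dl (σ q) = - Bfun l dl q := by
    intro q
    have hσq : σ q = -(0,1) - q := rfl
    by_cases h0 : q = 0
    · subst h0
      rw [hσq]
      norm_num [Bfun]
    · by_cases h1 : q = -(0,1)
      · subst h1
        rw [hσq]
        norm_num [Bfun]
      · have hσ0 : σ q ≠ 0 := by
          rw [hσq]; intro hh; exact h1 (sub_eq_zero.mp hh).symm
        have hσ1 : σ q ≠ -(0,1) := by
          rw [hσq]; intro hh; exact h0 (sub_eq_self.mp hh)
        rw [Bfun, Bfun, if_neg (by tauto), if_neg (by tauto)]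
        have hω' : latPt l dl (σ q) = -(2*(dl:ℂ)*Complex.I) - latPt l dl q := by
          have : σ q = -(0,1) + -q := by rw [hσq]; ring
          rw [this, latPt_add, latPt_neg, latPt_neg, latPt_e]; ring
        rw [hω']
        have e1 : -(2*(dl:ℂ)*Complex.I) - latPt l dl q + 2*(dl:ℂ)*Complex.I
            = -(latPt l dl q) := by ring
        have e2 : (-(2*(dl:ℂ)*Complex.I) - latPt l dl q)^2
            = (latPt l dl q + 2*(dl:ℂ)*Complex.I)^2 := by ring
        rw [e1, e2, neg_sq]
        ring
  have h2 : ∑' q, Bfun l dl q = ∑' q, Bfun l dl (σ q) := (σ.tsum_eq (Bfun l dl)).symm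
  rw [tsum_congr key, tsum_neg] at h2
  have h3 : (2:ℂ) * ∑' q, Bfun l dl q = 0 := by linear_combination h2
  rcases mul_eq_zero.mp h3 with h | h
  · exact absurd h two_ne_zero
  · exact h


lemma cfun_summable (z p : ℂ) :
    Summable (fun q : ℤ × ℤ => if q = 0 then 1/z + 1/p + (z+p)/p^2
      else if q = -(0,1) then -(1/(z+p)) + 1/p - z/p^2 else (0:ℂ)) := by
  apply summable_of_ne_finset_zero (s := {(0 : ℤ × ℤ), -(0,1)})
  intro b hb
  simp only [Finset.mem_insert, Finset.mem_singleton] at hb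
  push_neg at hb
  rw [if_neg hb.1, if_neg hb.2]

lemma wzeta_shift (hl : 0 < l) (hdl : 0 < dl) (z : ℂ) :
    wzeta l dl (z + 2 * (dl:ℂ) * Complex.I)
      = wzeta l dl z + (3 / (2 * (dl:ℂ) * Complex.I) + ∑' q : ℤ × ℤ, Afun l dl q) := by
  set p : ℂ := 2 * (dl:ℂ) * Complex.I with hp
  have hpne : p ≠ 0 := by
    rw [hp]
    apply mul_ne_zero (mul_ne_zero two_ne_zero _) Complex.I_ne_zero
    exact_mod_cast hdl.ne'
  set c : ℤ × ℤ → ℂ := fun q => if q = 0 then 1/z + 1/p + (z+p)/p^2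
      else if q = -(0,1) then -(1/(z+p)) + 1/p - z/p^2 else (0:ℂ) with hc
  have key : ∀ q : ℤ × ℤ, Tz l dl (z+p) (q + (0,1))
      = Tz l dl z q + (c q + (Afun l dl q + z * Bfun l dl q)) := by
    intro q
    by_cases h0 : q = 0
    · subst h0
      have hA : Afun l dl 0 = 0 := if_pos (Or.inl rfl)
      have hB : Bfun l dl 0 = 0 := if_pos (Or.inl rfl)
      have hT0 : Tz l dl z 0 = 0 := if_pos rfl
      have hc0 : c 0 = 1/z + 1/p + (z+p)/p^2 := if_pos rfl
      rw [show ((0:ℤ×ℤ) + (0,1)) = ((0,1) : ℤ × ℤ) by decide]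
      rw [Tz, if_neg (by decide : ((0,1) : ℤ×ℤ) ≠ 0), latPt_e, ← hp, hT0, hA, hB, hc0]
      have e1 : z + p - p = z := by ring
      rw [e1]
      ring
    · by_cases h1 : q = -(0,1)
      · subst h1
        have hA : Afun l dl (-(0,1)) = 0 := if_pos (Or.inr rfl)
        have hB : Bfun l dl (-(0,1)) = 0 := if_pos (Or.inr rfl)
        have hcm : c (-(0,1)) = -(1/(z+p)) + 1/p - z/p^2 := by
          show (if (-(0,1) : ℤ×ℤ) = 0 then _ else _) = _
          rw [if_neg (by decide : (-(0,1) : ℤ×ℤ) ≠ 0), if_pos rfl]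
        rw [show ((-(0,1):ℤ×ℤ) + (0,1)) = (0 : ℤ × ℤ) by decide]
        rw [Tz, if_pos rfl, Tz, if_neg h0, hA, hB, hcm, latPt_neg, latPt_e, ← hp]
        have e1 : z - -p = z + p := by ring
        have e2 : (-p)^2 = p^2 := by ring
        have e3 : (1:ℂ)/(-p) = -(1/p) := by rw [div_neg]
        rw [e1, e2, e3]
        ring
      · have h2 : q + (0,1) ≠ 0 := by
          intro hh; exact h1 (neg_eq_of_add_eq_zero_left hh).symm
        have hb : ¬(q = 0 ∨ q = -(0,1)) := by tauto
        have hA : Afun l dl q = 1 / (latPt l dl q + p) - 1 / latPt l dl q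
            + p / (latPt l dl q + p) ^ 2 := by rw [Afun, if_neg hb, ← hp]
        have hB : Bfun l dl q = 1 / (latPt l dl q + p) ^ 2 - 1 / (latPt l dl q) ^ 2 := by
          rw [Bfun, if_neg hb, ← hp]
        have hcq : c q = 0 := by
          show (if q = 0 then _ else _) = _
          rw [if_neg h0, if_neg h1]
        rw [Tz, if_neg h2, Tz, if_neg h0, hA, hB, hcq, latPt_add, latPt_e, ← hp]
        have e1 : z + p - (latPt l dl q + p) = z - latPt l dl q := by ring
        rw [e1]
        ring
  have hTz' : Summable (fun q : ℤ × ℤ => Tz l dl (z+p) (q + (0,1))) := by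
    apply (Equiv.addRight ((0,1) : ℤ × ℤ)).summable_iff.2 (summable_Tz hl hdl (z+p))
  have hsplit : ∑' q : ℤ × ℤ, Tz l dl (z+p) q = ∑' q : ℤ × ℤ, Tz l dl (z+p) (q + (0,1)) := by
    rw [← (Equiv.addRight ((0,1) : ℤ × ℤ)).tsum_eq (Tz l dl (z+p))]
    rfl
  have hsum2 : Summable (fun q : ℤ × ℤ => c q + (Afun l dl q + z * Bfun l dl q)) :=
    (cfun_summable z p).add ((summable_Afun hl hdl).add ((summable_Bfun hl hdl).mul_left z))
  have hsum_eq : ∑' q : ℤ × ℤ, Tz l dl (z+p) (q + (0,1))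
      = (∑' q : ℤ × ℤ, Tz l dl z q) + ∑' q : ℤ × ℤ, (c q + (Afun l dl q + z * Bfun l dl q)) := by
    rw [← Summable.tsum_add (summable_Tz hl hdl z) hsum2]
    exact tsum_congr key
  have hcsum : ∑' q : ℤ × ℤ, c q = (1/z + 1/p + (z+p)/p^2) + (-(1/(z+p)) + 1/p - z/p^2) := by
    rw [tsum_eq_sum (s := {(0 : ℤ × ℤ), -(0,1)}) (by
      intro b hb
      simp only [Finset.mem_insert, Finset.mem_singleton] at hb
      push_neg at hb
      rw [hc]
      simp only [if_neg hb.1, if_neg hb.2])]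
    rw [Finset.sum_pair (by decide : ((0 : ℤ × ℤ)) ≠ -(0,1))]
    have c1 : c 0 = 1/z + 1/p + (z+p)/p^2 := if_pos rfl
    have c2 : c (-(0,1)) = -(1/(z+p)) + 1/p - z/p^2 := by
      show (if (-(0,1) : ℤ×ℤ) = 0 then _ else _) = _
      rw [if_neg (by decide : (-(0,1) : ℤ×ℤ) ≠ 0), if_pos rfl]
    rw [c1, c2]
  have hrest : ∑' q : ℤ × ℤ, (c q + (Afun l dl q + z * Bfun l dl q))
      = ((1/z + 1/p + (z+p)/p^2) + (-(1/(z+p)) + 1/p - z/p^2))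
        + ((∑' q : ℤ × ℤ, Afun l dl q) + z * 0) := by
    rw [Summable.tsum_add (cfun_summable z p) ((summable_Afun hl hdl).add ((summable_Bfun hl hdl).mul_left z))]
    rw [Summable.tsum_add (summable_Afun hl hdl) ((summable_Bfun hl hdl).mul_left z)]
    rw [tsum_mul_left, tsum_Bfun_zero, hcsum]
  have hfact : (z+p)/p^2 - z/p^2 = 1/p := by
    field_simp
    ring
  rw [wzeta_eq, wzeta_eq, hsplit, hsum_eq, hrest]
  linear_combination hfact

lemma wzeta_period (hl : 0 < l) (hdl : 0 < dl) (z : ℂ) :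
    wzeta l dl (z + 2 * (dl:ℂ) * Complex.I) = wzeta l dl z + 2 * eta2 l dl := by
  have h1 := wzeta_shift hl hdl z
  have h2 := wzeta_shift hl hdl (-((dl:ℂ) * Complex.I))
  rw [show -((dl:ℂ) * Complex.I) + 2 * (dl:ℂ) * Complex.I = (dl:ℂ) * Complex.I by ring] at h2
  rw [wzeta_odd] at h2
  rw [h1, eta2]
  linear_combination -h2

lemma zeta2_period (hl : 0 < l) (hdl : 0 < dl) (z : ℂ) :
    zeta2 l dl (z + 2 * (dl:ℂ) * Complex.I) = zeta2 l dl z := by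
  have hne : (dl:ℂ) * Complex.I ≠ 0 :=
    mul_ne_zero (by exact_mod_cast hdl.ne') Complex.I_ne_zero
  rw [zeta2, zeta2, wzeta_period hl hdl]
  have hfact : eta2 l dl / ((dl:ℂ) * Complex.I) * (2 * (dl:ℂ) * Complex.I)
      = 2 * eta2 l dl := by
    have hdl' : (dl:ℂ) ≠ 0 := by exact_mod_cast hdl.ne'
    field_simp
  linear_combination -hfact

lemma zeta2_odd (z : ℂ) : zeta2 l dl (-z) = - zeta2 l dl z := by
  rw [zeta2, zeta2, wzeta_odd]
  ring



section ZetaLemmas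

lemma wp2_even (z : ℂ) : wp2 l dl (-z) = wp2 l dl z := by
  rw [wp2, wp2]
  have h1 : (fun x => zeta2 l dl (-x)) = fun x => -(zeta2 l dl x) := funext fun x => zeta2_odd x
  have h2 := deriv_comp_neg (f := zeta2 l dl) (x := z)
  rw [h1, deriv.fun_neg] at h2
  rw [← h2]

end ZetaLemmas

section MatrixHelpers

variable {dd : ℕ}

lemma vmv_smul_right (x y : Fin dd → ℂ) (c : ℂ) :
    Matrix.vecMulVec x (c • y) = c • Matrix.vecMulVec x y := by
  ext i m; simp [Matrix.vecMulVec_apply]; ring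

lemma vmv_smul_left (x y : Fin dd → ℂ) (c : ℂ) :
    Matrix.vecMulVec (c • x) y = c • Matrix.vecMulVec x y := by
  ext i m; simp [Matrix.vecMulVec_apply]; ring

lemma vmv_add_right (x y z : Fin dd → ℂ) :
    Matrix.vecMulVec x (y + z) = Matrix.vecMulVec x y + Matrix.vecMulVec x z := by
  ext i m; simp [Matrix.vecMulVec_apply]; ring

lemma vmv_sub_right (x y z : Fin dd → ℂ) :
    Matrix.vecMulVec x (y - z) = Matrix.vecMulVec x y - Matrix.vecMulVec x z := by
  ext i m; simp [Matrix.vecMulVec_apply]; ring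

lemma vmv_add_left (x y z : Fin dd → ℂ) :
    Matrix.vecMulVec (x + y) z = Matrix.vecMulVec x z + Matrix.vecMulVec y z := by
  ext i m; simp [Matrix.vecMulVec_apply]; ring

lemma vmv_sub_left (x y z : Fin dd → ℂ) :
    Matrix.vecMulVec (x - y) z = Matrix.vecMulVec x z - Matrix.vecMulVec y z := by
  ext i m; simp [Matrix.vecMulVec_apply]; ring

lemma vmv_sum_right {κ : Type*} (s : Finset κ) (x : Fin dd → ℂ) (y : κ → Fin dd → ℂ) :
    Matrix.vecMulVec x (∑ k ∈ s, y k) = ∑ k ∈ s, Matrix.vecMulVec x (y k) := by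
  ext i m
  simp [Matrix.vecMulVec_apply, Finset.sum_apply, Matrix.sum_apply, Finset.mul_sum]

lemma vmv_sum_left {κ : Type*} (s : Finset κ) (x : κ → Fin dd → ℂ) (y : Fin dd → ℂ) :
    Matrix.vecMulVec (∑ k ∈ s, x k) y = ∑ k ∈ s, Matrix.vecMulVec (x k) y := by
  ext i m
  simp [Matrix.vecMulVec_apply, Finset.sum_apply, Matrix.sum_apply, Finset.sum_mul]

lemma vmv_mul_vmv (x y u v : Fin dd → ℂ) :
    Matrix.vecMulVec x y * Matrix.vecMulVec u v = (y ⬝ᵥ u) • Matrix.vecMulVec x v := by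
  ext i m
  simp only [Matrix.mul_apply, Matrix.vecMulVec_apply, Matrix.smul_apply, dotProduct,
    smul_eq_mul, Finset.sum_mul, Finset.mul_sum]
  apply Finset.sum_congr rfl
  intros; ring

lemma vmv_mul_matrix (x y : Fin dd → ℂ) (M : Matrix (Fin dd) (Fin dd) ℂ) :
    Matrix.vecMulVec x y * M = Matrix.vecMulVec x (Matrix.vecMul y M) := by
  ext i m
  simp only [Matrix.mul_apply, Matrix.vecMulVec_apply, Matrix.vecMul, dotProduct,
    Finset.mul_sum]
  apply Finset.sum_congr rfl
  intros; ring

lemma matrix_mul_vmv (x y : Fin dd → ℂ) (M : Matrix (Fin dd) (Fin dd) ℂ) :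
    M * Matrix.vecMulVec x y = Matrix.vecMulVec (Matrix.mulVec M x) y := by
  ext i m
  simp only [Matrix.mul_apply, Matrix.vecMulVec_apply, Matrix.mulVec, dotProduct,
    Finset.sum_mul]
  apply Finset.sum_congr rfl
  intros; ring

lemma hasDerivAt_dot {f g : ℝ → Fin dd → ℂ} {f' g' : Fin dd → ℂ} {t : ℝ}
    (hf : HasDerivAt f f' t) (hg : HasDerivAt g g' t) :
    HasDerivAt (fun s => f s ⬝ᵥ g s) (f' ⬝ᵥ g t + f t ⬝ᵥ g') t := by
  have h : ∀ i ∈ Finset.univ, HasDerivAt (fun s => f s i * g s i)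
      (f' i * g t i + f t i * g' i) t := fun i _ =>
    ((hasDerivAt_pi.mp hf) i).mul ((hasDerivAt_pi.mp hg) i)
  have e1 : (fun s => f s ⬝ᵥ g s) = fun s => ∑ i, f s i * g s i := by
    funext s; simp [dotProduct]
  have e2 : f' ⬝ᵥ g t + f t ⬝ᵥ g' = ∑ i, (f' i * g t i + f t i * g' i) := by
    simp [dotProduct, Finset.sum_add_distrib]
  rw [e1, e2]
  exact HasDerivAt.fun_sum h

lemma dot_sum_left {κ : Type*} (s : Finset κ) (x : κ → Fin dd → ℂ) (w : Fin dd → ℂ) :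
    (∑ k ∈ s, x k) ⬝ᵥ w = ∑ k ∈ s, x k ⬝ᵥ w := by
  simp only [dotProduct, Finset.sum_apply, Finset.sum_mul]
  exact Finset.sum_comm

lemma dot_sum_right {κ : Type*} (s : Finset κ) (w : Fin dd → ℂ) (x : κ → Fin dd → ℂ) :
    w ⬝ᵥ (∑ k ∈ s, x k) = ∑ k ∈ s, w ⬝ᵥ x k := by
  simp only [dotProduct, Finset.sum_apply, Finset.mul_sum]
  exact Finset.sum_comm

lemma sum_erase_antisym {n : ℕ} (F : Fin n → Fin n → Matrix (Fin dd) (Fin dd) ℂ)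
    (hanti : ∀ j k, F j k = - F k j) :
    ∑ j, ∑ k ∈ Finset.univ.erase j, F j k = 0 := by
  have hdiag : ∀ j, F j j = 0 := by
    intro j
    have h := hanti j j
    have h2 : (2:ℂ) • F j j = 0 := by
      rw [two_smul]
      nth_rewrite 2 [h]
      simp
    have := congrArg (fun X => ((2:ℂ)⁻¹) • X) h2
    simpa [smul_smul] using this
  have hfull : ∀ j, ∑ k ∈ Finset.univ.erase j, F j k = ∑ k, F j k := fun j =>
    Finset.sum_erase _ (hdiag j)
  have hS : ∑ j, ∑ k, F j k = - ∑ j, ∑ k, F j k := by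
    nth_rewrite 1 [Finset.sum_comm]
    rw [← Finset.sum_neg_distrib]
    apply Finset.sum_congr rfl
    intro j _
    rw [← Finset.sum_neg_distrib]
    apply Finset.sum_congr rfl
    intro k _
    exact hanti k j
  have h2 : (2:ℂ) • (∑ j, ∑ k, F j k) = 0 := by
    rw [two_smul]
    nth_rewrite 2 [hS]
    simp
  have h3 : ∑ j, ∑ k, F j k = 0 := by
    have := congrArg (fun X => ((2:ℂ)⁻¹) • X) h2
    simpa [smul_smul] using this
  calc ∑ j, ∑ k ∈ Finset.univ.erase j, F j k = ∑ j, ∑ k, F j k := by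
        apply Finset.sum_congr rfl
        intro j _
        exact hfull j
    _ = 0 := h3

end MatrixHelpers

variable {d N : ℕ}

/-- Right-hand side of the elliptic sCM spin equation for `|e_j⟩`. -/
def spinErhs (l dl : ℝ) (a : Fin N → ℝ → ℂ) (e f : Fin N → ℝ → Fin d → ℂ)
    (j : Fin N) (t : ℝ) : Fin d → ℂ :=
  (2 * Complex.I) • ∑ k ∈ Finset.univ.erase j,
    (wp2 l dl (a j t - a k t) * (f k t ⬝ᵥ e j t)) • e k t

/-- Right-hand side of the elliptic sCM spin equation for `⟨f_j|`. -/
def spinFrhs (l dl : ℝ) (a : Fin N → ℝ → ℂ) (e f : Fin N → ℝ → Fin d → ℂ)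
    (j : Fin N) (t : ℝ) : Fin d → ℂ :=
  (-(2 * Complex.I)) • ∑ k ∈ Finset.univ.erase j,
    (wp2 l dl (a j t - a k t) * (f j t ⬝ᵥ e k t)) • f k t

/-- Right-hand side of the elliptic sCM equation for `a_j''`. -/
def sCMrhs (l dl : ℝ) (a : Fin N → ℝ → ℂ) (e f : Fin N → ℝ → Fin d → ℂ)
    (j : Fin N) (t : ℝ) : ℂ :=
  (-4) * ∑ k ∈ Finset.univ.erase j,
    (f j t ⬝ᵥ e k t) * (f k t ⬝ᵥ e j t) * wp2' l dl (a j t - a k t)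

/-- The spin matrix `e_j f_j` (rank-one outer product). -/
def spinMat (e f : Fin N → ℝ → Fin d → ℂ) (j : Fin N) (t : ℝ) :
    Matrix (Fin d) (Fin d) ℂ :=
  Matrix.vecMulVec (e j t) (f j t)

/-- Right-hand side of the evolution equation for the background `M`. -/
def bgRhs (l dl : ℝ) (a b : Fin N → ℝ → ℂ) (e f g h : Fin N → ℝ → Fin d → ℂ)
    (t : ℝ) : Matrix (Fin d) (Fin d) ℂ :=
  (-(1 / 2 : ℂ)) • ∑ j, ∑ k ∈ Finset.univ.erase j,
      kappa' l dl (a j t - a k t) •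
        (spinMat e f j t * spinMat e f k t - spinMat e f k t * spinMat e f j t)
    + (1 / 2 : ℂ) • ∑ j, ∑ k ∈ Finset.univ.erase j,
      kappa' l dl (b j t - b k t) •
        (spinMat g h j t * spinMat g h k t - spinMat g h k t * spinMat g h j t)

/-- The Bäcklund relation for the row variables `⟨f_j|` at time `t`. -/
def BTrow (l dl : ℝ) (a b da : Fin N → ℝ → ℂ) (e f g h : Fin N → ℝ → Fin d → ℂ)
    (Mm : ℝ → Matrix (Fin d) (Fin d) ℂ) (t : ℝ) : Prop :=
  ∀ j, da j t • f j t = (2 : ℂ) • Matrix.vecMul (f j t) (Mm t)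
    + (2 * Complex.I) • (∑ k ∈ Finset.univ.erase j,
        ((f j t ⬝ᵥ e k t) * zeta2 l dl (a j t - a k t)) • f k t)
    - (2 * Complex.I) • (∑ k : Fin N,
        ((f j t ⬝ᵥ g k t) * zeta2 l dl (a j t - b k t)) • h k t)

/-- The Bäcklund relation for the column variables `|g_j⟩` at time `t`. -/
def BTcol (l dl : ℝ) (a b db : Fin N → ℝ → ℂ) (e f g h : Fin N → ℝ → Fin d → ℂ)
    (Mm : ℝ → Matrix (Fin d) (Fin d) ℂ) (t : ℝ) : Prop :=
  ∀ j, db j t • g j t = (2 : ℂ) • Matrix.mulVec (Mm t) (g j t)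
    - (2 * Complex.I) • (∑ k ∈ Finset.univ.erase j,
        ((h k t ⬝ᵥ g j t) * zeta2 l dl (b j t - b k t)) • g k t)
    + (2 * Complex.I) • (∑ k : Fin N,
        ((f k t ⬝ᵥ g j t) * zeta2 l dl (b j t - a k t)) • e k t)

/-- from the first-order Bäcklund system in the shifted (tilde) variables
to the first-order system for the spin matrices `P_j = e_j f_j`, `Q_j = g_j h_j`. -/
theorem tilde_backlund_to_matrix_system (l dl : ℝ) (hl : 0 < l) (hdl : 0 < dl)
    (d N : ℕ) (hd : 1 ≤ d) (hN : 1 ≤ N) (τ : EReal) (hτ : 0 < τ)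
    (a b da db ta tb : Fin N → ℝ → ℂ) (e f g h : Fin N → ℝ → Fin d → ℂ)
    (Mm : ℝ → Matrix (Fin d) (Fin d) ℂ)
    -- the tilde variables
    (hta : ta = fun j s => a j s - ((dl : ℂ) / 2) * Complex.I)
    (htb : tb = fun j s => b j s + ((dl : ℂ) / 2) * Complex.I)
    (hadiff : ∀ t : ℝ, 0 ≤ t → (t : EReal) < τ → ∀ j, HasDerivAt (a j) (da j t) t)
    (hbdiff : ∀ t : ℝ, 0 ≤ t → (t : EReal) < τ → ∀ j, HasDerivAt (b j) (db j t) t)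
    -- tilde separation conditions
    (hsep : ∀ t : ℝ, 0 ≤ t → (t : EReal) < τ →
      (∀ j k, j ≠ k → ¬ inLattice l dl (ta j t - ta k t)) ∧
      (∀ j k, j ≠ k → ¬ inLattice l dl (tb j t - tb k t)) ∧
      (∀ j k, ¬ inLattice l dl (ta j t - tb k t)))
    -- the spin equations in the tilde variables
    (hspinE : ∀ t : ℝ, 0 ≤ t → (t : EReal) < τ → ∀ j,
      HasDerivAt (e j) (spinErhs l dl ta e f j t) t)
    (hspinF : ∀ t : ℝ, 0 ≤ t → (t : EReal) < τ → ∀ j,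
      HasDerivAt (f j) (spinFrhs l dl ta e f j t) t)
    (hspinG : ∀ t : ℝ, 0 ≤ t → (t : EReal) < τ → ∀ j,
      HasDerivAt (g j) (spinErhs l dl tb g h j t) t)
    (hspinH : ∀ t : ℝ, 0 ≤ t → (t : EReal) < τ → ∀ j,
      HasDerivAt (h j) (spinFrhs l dl tb g h j t) t)
    -- the background equation in the tilde variables
    (hbg : ∀ t : ℝ, 0 ≤ t → (t : EReal) < τ → ∀ i m : Fin d,
      HasDerivAt (fun s => Mm s i m) (bgRhs l dl ta tb e f g h t i m) t)
    -- the Bäcklund relations in the tilde variables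
    (hBT : ∀ t : ℝ, 0 ≤ t → (t : EReal) < τ →
      BTrow l dl ta tb da e f g h Mm t ∧ BTcol l dl ta tb db e f g h Mm t)
    -- conditions at t = 0
    (hnorm : ∀ j, f j 0 ⬝ᵥ e j 0 = 1 ∧ h j 0 ⬝ᵥ g j 0 = 1)
    (htot : ∑ j, spinMat e f j 0 = ∑ j, spinMat g h j 0) :
    ∀ t : ℝ, 0 ≤ t → (t : EReal) < τ →
      (∀ j, da j t • spinMat e f j t
        = (2 : ℂ) • (spinMat e f j t * Mm t)
          + (2 * Complex.I) • (∑ k ∈ Finset.univ.erase j,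
              zeta2 l dl (a j t - a k t) • (spinMat e f j t * spinMat e f k t))
          - (2 * Complex.I) • (∑ k : Fin N,
              zeta2 l dl (a j t - b k t + (dl : ℂ) * Complex.I) •
                (spinMat e f j t * spinMat g h k t))) ∧
      (∀ j, db j t • spinMat g h j t
        = (2 : ℂ) • (Mm t * spinMat g h j t)
          - (2 * Complex.I) • (∑ k ∈ Finset.univ.erase j,
              zeta2 l dl (b j t - b k t) • (spinMat g h k t * spinMat g h j t))
          + (2 * Complex.I) • (∑ k : Fin N,
              zeta2 l dl (b j t - a k t + (dl : ℂ) * Complex.I) •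
                (spinMat e f k t * spinMat g h j t))) ∧
      (∀ j, ∀ i m : Fin d, HasDerivAt (fun s => spinMat e f j s i m)
        (((-(2 * Complex.I)) • ∑ k ∈ Finset.univ.erase j,
          wp2 l dl (a j t - a k t) •
            (spinMat e f j t * spinMat e f k t - spinMat e f k t * spinMat e f j t)) i m) t) ∧
      (∀ j, ∀ i m : Fin d, HasDerivAt (fun s => spinMat g h j s i m)
        (((-(2 * Complex.I)) • ∑ k ∈ Finset.univ.erase j,
          wp2 l dl (b j t - b k t) •
            (spinMat g h j t * spinMat g h k t - spinMat g h k t * spinMat g h j t)) i m) t) ∧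
      (∀ j, spinMat e f j t * spinMat e f j t = spinMat e f j t) ∧
      (∀ j, spinMat g h j t * spinMat g h j t = spinMat g h j t) ∧
      ∑ j, spinMat e f j t = ∑ j, spinMat g h j t := by
  -- rewriting lemmas for the tilde arguments
  have hargA : ∀ (j k : Fin N) (s : ℝ), ta j s - ta k s = a j s - a k s := by
    intro j k s; simp only [hta]; ring
  have hargB : ∀ (j k : Fin N) (s : ℝ), tb j s - tb k s = b j s - b k s := by
    intro j k s; simp only [htb]; ring
  have hargBA : ∀ (j k : Fin N) (s : ℝ),
      tb j s - ta k s = b j s - a k s + (dl:ℂ) * Complex.I := by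
    intro j k s; simp only [hta, htb]; ring
  have hzcross : ∀ (j k : Fin N) (s : ℝ),
      zeta2 l dl (a j s - b k s + (dl:ℂ) * Complex.I) = zeta2 l dl (ta j s - tb k s) := by
    intro j k s
    rw [← zeta2_period hl hdl (ta j s - tb k s)]
    congr 1
    simp only [hta, htb]; ring
  -- the P-matrix derivative formula
  have hPder : ∀ (c : Fin N → ℝ → ℂ) (cc : Fin N → ℝ → ℂ)
      (u v : Fin N → ℝ → Fin d → ℂ),
      (∀ (j k : Fin N) (s : ℝ), c j s - c k s = cc j s - cc k s) →
      (∀ t : ℝ, 0 ≤ t → (t : EReal) < τ → ∀ j, HasDerivAt (u j) (spinErhs l dl c u v j t) t) →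
      (∀ t : ℝ, 0 ≤ t → (t : EReal) < τ → ∀ j, HasDerivAt (v j) (spinFrhs l dl c u v j t) t) →
      ∀ t : ℝ, 0 ≤ t → (t : EReal) < τ → ∀ j (i m : Fin d),
      HasDerivAt (fun s => spinMat u v j s i m)
        (((-(2 * Complex.I)) • ∑ k ∈ Finset.univ.erase j,
          wp2 l dl (cc j t - cc k t) • (spinMat u v j t * spinMat u v k t
            - spinMat u v k t * spinMat u v j t)) i m) t := by
    intro c cc u v hcc hU hV t ht0 htτ j i m
    have hprod := ((hasDerivAt_pi.mp (hU t ht0 htτ j)) i).fun_mul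
      ((hasDerivAt_pi.mp (hV t ht0 htτ j)) m)
    have e1 : (fun s => spinMat u v j s i m) = fun s => u j s i * v j s m := by
      funext s; simp [spinMat, Matrix.vecMulVec_apply]
    rw [e1]
    refine (hprod.congr_deriv ?_); symm
    have hmul : ∀ (j' k' : Fin N), spinMat u v j' t * spinMat u v k' t
        = (v j' t ⬝ᵥ u k' t) • Matrix.vecMulVec (u j' t) (v k' t) := by
      intro j' k'; exact vmv_mul_vmv _ _ _ _
    simp only [Matrix.smul_apply, Matrix.sum_apply, Matrix.sub_apply, hmul,
      Matrix.vecMulVec_apply, smul_eq_mul, spinErhs, spinFrhs, Pi.smul_apply,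
      Finset.sum_apply]
    simp only [Finset.mul_sum, Finset.sum_mul]
    rw [← Finset.sum_add_distrib]
    apply Finset.sum_congr rfl
    intro k hk
    rw [hcc j k t]
    ring
  -- conservation of the normalizations
  have hdotconst : ∀ (c : Fin N → ℝ → ℂ) (u v : Fin N → ℝ → Fin d → ℂ),
      (∀ t : ℝ, 0 ≤ t → (t : EReal) < τ → ∀ j, HasDerivAt (u j) (spinErhs l dl c u v j t) t) →
      (∀ t : ℝ, 0 ≤ t → (t : EReal) < τ → ∀ j, HasDerivAt (v j) (spinFrhs l dl c u v j t) t) →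
      ∀ (j : Fin N) (t : ℝ), 0 ≤ t → (t : EReal) < τ →
        v j t ⬝ᵥ u j t = v j 0 ⬝ᵥ u j 0 := by
    intro c u v hU hV j t ht0 htτ
    have key : ∀ s : ℝ, 0 ≤ s → (s : EReal) < τ →
        HasDerivAt (fun r => v j r ⬝ᵥ u j r) 0 s := by
      intro s hs0 hsτ
      have hd := hasDerivAt_dot (hV s hs0 hsτ j) (hU s hs0 hsτ j)
      convert hd using 1
      rw [spinFrhs, spinErhs, smul_dotProduct, dotProduct_smul,
        dot_sum_left, dot_sum_right]
      simp only [smul_dotProduct, dotProduct_smul, smul_eq_mul,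
        Finset.mul_sum]
      rw [← Finset.sum_add_distrib]
      symm
      apply Finset.sum_eq_zero
      intro k hk
      ring
    have hmem : ∀ s ∈ Icc (0:ℝ) t, HasDerivAt (fun r => v j r ⬝ᵥ u j r) 0 s := by
      intro s hs
      exact key s hs.1 (lt_of_le_of_lt (EReal.coe_le_coe_iff.mpr hs.2) htτ)
    have := constant_of_has_deriv_right_zero
      (f := fun r => v j r ⬝ᵥ u j r) (a := 0) (b := t)
      (fun s hs => (hmem s hs).continuousAt.continuousWithinAt)
      (fun s hs => (hmem s (Ico_subset_Icc_self hs)).hasDerivWithinAt)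
    exact this t ⟨ht0, le_rfl⟩
  have hfe : ∀ (j : Fin N) (t : ℝ), 0 ≤ t → (t : EReal) < τ → f j t ⬝ᵥ e j t = 1 := by
    intro j t ht0 htτ
    rw [hdotconst ta e f hspinE hspinF j t ht0 htτ, (hnorm j).1]
  have hhg : ∀ (j : Fin N) (t : ℝ), 0 ≤ t → (t : EReal) < τ → h j t ⬝ᵥ g j t = 1 := by
    intro j t ht0 htτ
    rw [hdotconst tb g h hspinG hspinH j t ht0 htτ, (hnorm j).2]
  have hPde := hPder ta a e f hargA hspinE hspinF
  have hQde := hPder tb b g h hargB hspinG hspinH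
  -- total spin conservation
  have htotal : ∀ t : ℝ, 0 ≤ t → (t : EReal) < τ →
      ∑ j, spinMat e f j t = ∑ j, spinMat g h j t := by
    intro t ht0 htτ
    have hzero : ∀ (cc : Fin N → ℝ → ℂ) (u v : Fin N → ℝ → Fin d → ℂ) (s : ℝ),
        ∑ j, ((-(2 * Complex.I)) • ∑ k ∈ Finset.univ.erase j,
          wp2 l dl (cc j s - cc k s) • (spinMat u v j s * spinMat u v k s
            - spinMat u v k s * spinMat u v j s)) = 0 := by
      intro cc u v s
      rw [← Finset.smul_sum]
      rw [sum_erase_antisym (fun j k => wp2 l dl (cc j s - cc k s) •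
        (spinMat u v j s * spinMat u v k s - spinMat u v k s * spinMat u v j s))]
      · simp
      · intro j k
        have hw : wp2 l dl (cc j s - cc k s) = wp2 l dl (cc k s - cc j s) := by
          rw [show cc j s - cc k s = -(cc k s - cc j s) by ring, wp2_even]
        rw [hw, ← smul_neg, neg_sub]
    ext i m
    have key : ∀ s : ℝ, 0 ≤ s → (s : EReal) < τ →
        HasDerivAt (fun r => (∑ j, spinMat e f j r i m) - ∑ j, spinMat g h j r i m) 0 s := by
      intro s hs0 hsτ
      have hP := HasDerivAt.fun_sum (fun j (_ : j ∈ Finset.univ) => hPde s hs0 hsτ j i m)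
      have hQ := HasDerivAt.fun_sum (fun j (_ : j ∈ Finset.univ) => hQde s hs0 hsτ j i m)
      have := hP.fun_sub hQ
      refine this.congr_deriv ?_
      rw [← Matrix.sum_apply i m Finset.univ, ← Matrix.sum_apply i m Finset.univ]
      rw [hzero a e f s, hzero b g h s]
      simp
    have hmem : ∀ s ∈ Icc (0:ℝ) t, HasDerivAt
        (fun r => (∑ j, spinMat e f j r i m) - ∑ j, spinMat g h j r i m) 0 s := by
      intro s hs
      exact key s hs.1 (lt_of_le_of_lt (EReal.coe_le_coe_iff.mpr hs.2) htτ)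
    have hcst := constant_of_has_deriv_right_zero
      (f := fun r => (∑ j, spinMat e f j r i m) - ∑ j, spinMat g h j r i m) (a := 0) (b := t)
      (fun s hs => (hmem s hs).continuousAt.continuousWithinAt)
      (fun s hs => (hmem s (Ico_subset_Icc_self hs)).hasDerivWithinAt)
    have h0 : (∑ j, spinMat e f j t i m) - ∑ j, spinMat g h j t i m
        = (∑ j, spinMat e f j 0 i m) - ∑ j, spinMat g h j 0 i m := hcst t ⟨ht0, le_rfl⟩
    have h00 : (∑ j, spinMat e f j 0 i m) - ∑ j, spinMat g h j 0 i m = 0 := by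
      rw [← Matrix.sum_apply, ← Matrix.sum_apply, htot, sub_self]
    rw [h00] at h0
    have := sub_eq_zero.mp h0
    calc (∑ j, spinMat e f j t) i m = ∑ j, spinMat e f j t i m := Matrix.sum_apply i m _ _
      _ = ∑ j, spinMat g h j t i m := this
      _ = (∑ j, spinMat g h j t) i m := (Matrix.sum_apply i m _ _).symm
  -- now prove all claims at time t
  intro t ht0 htτ
  refine ⟨?_, ?_, fun j => hPde t ht0 htτ j, fun j => hQde t ht0 htτ j, ?_, ?_,
    htotal t ht0 htτ⟩
  · -- row Bäcklund in matrix form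
    intro j
    have hrow := (hBT t ht0 htτ).1 j
    simp only [spinMat]
    have lhs1 : da j t • Matrix.vecMulVec (e j t) (f j t)
        = Matrix.vecMulVec (e j t) (da j t • f j t) := (vmv_smul_right _ _ _).symm
    rw [lhs1, hrow, vmv_sub_right, vmv_add_right]
    congr 1
    · congr 1
      · rw [vmv_smul_right, vmv_mul_matrix]
      · rw [vmv_smul_right, vmv_sum_right]
        congr 1
        apply Finset.sum_congr rfl
        intro k hk
        rw [vmv_smul_right]
        rw [vmv_mul_vmv (e j t) (f j t) (e k t) (f k t), smul_smul, hargA j k t]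
        ring_nf
    · rw [vmv_smul_right, vmv_sum_right]
      congr 1
      apply Finset.sum_congr rfl
      intro k _
      rw [vmv_smul_right]
      rw [vmv_mul_vmv (e j t) (f j t) (g k t) (h k t), smul_smul, hzcross j k t]
      ring_nf
  · -- column Bäcklund in matrix form
    intro j
    have hcol := (hBT t ht0 htτ).2 j
    simp only [spinMat]
    have lhs1 : db j t • Matrix.vecMulVec (g j t) (h j t)
        = Matrix.vecMulVec (db j t • g j t) (h j t) := (vmv_smul_left _ _ _).symm
    rw [lhs1, hcol, vmv_add_left, vmv_sub_left]
    congr 1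
    · congr 1
      · rw [vmv_smul_left, matrix_mul_vmv]
      · rw [vmv_smul_left, vmv_sum_left]
        congr 1
        apply Finset.sum_congr rfl
        intro k _
        rw [vmv_smul_left]
        rw [vmv_mul_vmv (g k t) (h k t) (g j t) (h j t), smul_smul, hargB j k t]
        ring_nf
    · rw [vmv_smul_left, vmv_sum_left]
      congr 1
      apply Finset.sum_congr rfl
      intro k _
      rw [vmv_smul_left]
      rw [vmv_mul_vmv (e k t) (f k t) (g j t) (h j t), smul_smul, ← hargBA j k t]
      ring_nf
  · -- P_j is a projection
    intro j
    show Matrix.vecMulVec (e j t) (f j t) * Matrix.vecMulVec (e j t) (f j t) = _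
    rw [vmv_mul_vmv, hfe j t ht0 htτ, one_smul]
    rfl
  · intro j
    show Matrix.vecMulVec (g j t) (h j t) * Matrix.vecMulVec (g j t) (h j t) = _
    rw [vmv_mul_vmv, hhg j t ht0 htτ, one_smul]
    rfl


end
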